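/- For any nonzero monomial M = Π x_i^{a_i} in C[x]/(θ_n) (i.e., a_i < d for at least one i), with colored index permutation γ(M) = ((c_1,...,c_n),σ), the sequence (a_{σ(i)} - f_i(γ(M)))_{i=1}^{n-1} consists of nonnegative multiples of r and is weakly decreasing. -/

import Mathlib

open Finset

namespace ColoredPerm

/-- An element of the wreath product `G(r,n) = ℤ_r ≀ S_n`: a color vector and a permutation. -/
abbrev CPerm (r n : ℕ) := (Fin n → Fin r) × Equiv.Perm (Fin n)

variable {r n : ℕ}

/-- Descent at the (0-indexed) position `j`, i.e. the paper's descent at position `j+1`: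
`γ_{j+1} ≻ γ_{j+2}` in the order where higher colors are smaller, ties by the values. -/
def isDesc (g : CPerm r n) (j : ℕ) : Prop :=
  ∃ h : j + 1 < n,
    (g.1 ⟨j, Nat.lt_of_succ_lt h⟩ < g.1 ⟨j + 1, h⟩) ∨
      (g.1 ⟨j, Nat.lt_of_succ_lt h⟩ = g.1 ⟨j + 1, h⟩ ∧
        g.2 ⟨j + 1, h⟩ < g.2 ⟨j, Nat.lt_of_succ_lt h⟩)

instance (g : CPerm r n) (j : ℕ) : Decidable (isDesc g j) := by
  unfold isDesc; exact exists_prop_decidable _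

/-- The descent set (0-indexed positions). -/
def Des (g : CPerm r n) : Finset ℕ := (Finset.range n).filter (isDesc g)

def des (g : CPerm r n) : ℕ := (Des g).card

/-- The major index: sum of the (1-indexed) descent positions. -/
def maj (g : CPerm r n) : ℕ := ∑ j ∈ Des g, (j + 1)

/-- The color weight. -/
def col (g : CPerm r n) : ℕ := ∑ i, (g.1 i : ℕ)

/-- The flag major index. -/
def fmaj (g : CPerm r n) : ℕ := r * maj g + col g

/-- `dstat g i` is the paper's `d_i(g)`: the number of (1-indexed) descents `≥ i`. -/
def dstat (g : CPerm r n) (i : ℕ) : ℕ := ((Des g).filter fun j => i ≤ j + 1).card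

/-- `fstat g i` is the paper's `f_{i+1}(g) = r·d_{i+1}(g) + c_{i+1}(g)` (0-indexed `i`). -/
def fstat (g : CPerm r n) (i : Fin n) : ℕ := r * dstat g ((i : ℕ) + 1) + (g.1 i : ℕ)

/-- The flag descent number `fdes = r·des + c_1`. -/
def fdes (g : CPerm r n) (hn : 0 < n) : ℕ := r * des g + (g.1 ⟨0, hn⟩ : ℕ)

/-- `Γ(r,p,n)`: colored permutations whose last color is `< d = r/p`. -/
def Gamma (r p n : ℕ) (hn : 0 < n) : Finset (CPerm r n) :=
  Finset.univ.filter fun g => (g.1 ⟨n - 1, Nat.sub_lt hn one_pos⟩ : ℕ) < r / p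

/-- `G(r,p,n)` as the set of colored permutations with color weight `≡ 0 (mod p)`. -/
def Hfin (r p n : ℕ) : Finset (CPerm r n) :=
  Finset.univ.filter fun g => (∑ i, (g.1 i : ℕ)) % p = 0

end ColoredPerm


namespace ColoredPerm

lemma mem_Des {r n : ℕ} {g : CPerm r n} {j : ℕ} : j ∈ Des g ↔ isDesc g j := by
  simp only [Des, Finset.mem_filter, Finset.mem_range, and_iff_right_iff_imp]
  rintro ⟨h, -⟩; omega

lemma dstat_succ {r n : ℕ} (g : CPerm r n) (j : ℕ) :
    dstat g (j + 1) = dstat g (j + 2) + (if isDesc g j then 1 else 0) := by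
  unfold dstat
  have h1 : (Des g).filter (fun k => j + 1 ≤ k + 1)
      = ((Des g).filter (fun k => j + 2 ≤ k + 1)) ∪ ((Des g).filter (fun k => k = j)) := by
    rw [← Finset.filter_or]
    apply Finset.filter_congr
    intro k _
    omega
  rw [h1, Finset.card_union_of_disjoint, Finset.filter_eq']
  · split_ifs with h h2 h3
    · rw [mem_Des] at h; simp [h2] at h ⊢
    · rw [mem_Des] at h; simp [h] at h2
    · rw [mem_Des] at h; exact absurd h3 h
    · simp
  · simp only [Finset.disjoint_left, Finset.mem_filter]
    rintro x ⟨-, hx⟩ ⟨-, rfl⟩; omega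

lemma dstat_top {r n : ℕ} (g : CPerm r n) : dstat g n = 0 := by
  unfold dstat
  rw [Finset.card_eq_zero, Finset.filter_eq_empty_iff]
  intro k hk
  rw [mem_Des] at hk
  obtain ⟨h, -⟩ := hk
  omega

end ColoredPerm

lemma aux_dvd_le {r t z : ℤ} (hr : 0 < r) (hz : 0 ≤ z) (ht : t < r) (hd : r ∣ z - t) :
    t ≤ z := by
  obtain ⟨k, hk⟩ := hd
  rcases le_or_gt 0 k with h | h
  · nlinarith
  · have : r * k ≤ r * (-1) := by
      apply mul_le_mul_of_nonneg_left (by omega) (le_of_lt hr)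
    linarith


open ColoredPerm in
/-- Let `M = Π x_i^{a_i}` be a nonzero monomial of `ℂ[x]/(θ_n)` (some
`a_i < d`) and let `γ = ((c_1,…,c_n),σ) ∈ Γ(r,p,n)` be its colored index permutation, i.e.
`a_{σ(i)} ≥ a_{σ(i+1)}`, ties broken by `σ(i) < σ(i+1)`, and `a_{σ(i)} ≡ c_i (mod r)`.
Then the sequence `(a_{σ(i)} − f_i(γ))_{i=1}^{n-1}` consists of nonnegative multiples of `r`
and is weakly decreasing. -/
theorem complementary_partition (r p n : ℕ) (hr : 0 < r) (hp : 0 < p) (hn : 0 < n)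
    (hpr : p ∣ r) (a : Fin n → ℕ) (γ : CPerm r n) (hγ : γ ∈ Gamma r p n hn)
    (hmono : ∀ (j : ℕ) (h : j + 1 < n),
      a (γ.2 ⟨j + 1, h⟩) ≤ a (γ.2 ⟨j, Nat.lt_of_succ_lt h⟩))
    (hties : ∀ (j : ℕ) (h : j + 1 < n),
      a (γ.2 ⟨j, Nat.lt_of_succ_lt h⟩) = a (γ.2 ⟨j + 1, h⟩) →
        γ.2 ⟨j, Nat.lt_of_succ_lt h⟩ < γ.2 ⟨j + 1, h⟩)
    (hcol : ∀ i : Fin n, a (γ.2 i) % r = (γ.1 i : ℕ))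
    (hM : ∃ i, a i < r / p) :
    (∀ (j : ℕ) (h : j + 1 < n),
        fstat γ ⟨j, Nat.lt_of_succ_lt h⟩ ≤ a (γ.2 ⟨j, Nat.lt_of_succ_lt h⟩) ∧
          r ∣ a (γ.2 ⟨j, Nat.lt_of_succ_lt h⟩) - fstat γ ⟨j, Nat.lt_of_succ_lt h⟩) ∧
      ∀ (j : ℕ) (h : j + 2 < n),
        a (γ.2 ⟨j + 1, Nat.lt_of_succ_lt h⟩) - fstat γ ⟨j + 1, Nat.lt_of_succ_lt h⟩ ≤
          a (γ.2 ⟨j, Nat.lt_of_succ_lt (Nat.lt_of_succ_lt h)⟩) -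
            fstat γ ⟨j, Nat.lt_of_succ_lt (Nat.lt_of_succ_lt h)⟩ := by
  classical
  -- basic notation
  have hdvd : ∀ i : Fin n, (r : ℤ) ∣ (a (γ.2 i) : ℤ) - ((γ.1 i : ℕ) : ℤ) := by
    intro i
    refine ⟨(a (γ.2 i) / r : ℕ), ?_⟩
    have h2 : a (γ.2 i) = r * (a (γ.2 i) / r) + (γ.1 i : ℕ) := by
      conv_lhs => rw [← Nat.div_add_mod (a (γ.2 i)) r, hcol i]
    set q := a (γ.2 i) / r with hq
    push_cast [h2]
    ring
  -- monotone chain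
  have hb_mono : ∀ (m : ℕ) (hm : m < n) (k : ℕ) (hk : k ≤ m),
      a (γ.2 ⟨m, hm⟩) ≤ a (γ.2 ⟨k, lt_of_le_of_lt hk hm⟩) := by
    intro m
    induction m with
    | zero => intro hm k hk; interval_cases k; exact le_refl _
    | succ m ih =>
      intro hm k hk
      rcases Nat.eq_or_lt_of_le hk with h | h
      · subst h; exact le_refl _
      · exact le_trans (hmono m hm) (ih (Nat.lt_of_succ_lt hm) k (by omega))
  -- last entry equals its color
  have hnn : n - 1 < n := Nat.sub_lt hn one_pos
  have hlast_lt : a (γ.2 ⟨n - 1, hnn⟩) < r := by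
    obtain ⟨i, hi⟩ := hM
    have hk := (γ.2.symm i).isLt
    have h1 : a (γ.2 ⟨n - 1, hnn⟩) ≤ a (γ.2 ⟨(γ.2.symm i : ℕ), hk⟩) :=
      hb_mono (n - 1) hnn _ (by omega)
    rw [Fin.eta, Equiv.apply_symm_apply] at h1
    calc a (γ.2 ⟨n - 1, hnn⟩) ≤ a i := h1
      _ < r / p := hi
      _ ≤ r := Nat.div_le_self r p
  have hlast : a (γ.2 ⟨n - 1, hnn⟩) = (γ.1 ⟨n - 1, hnn⟩ : ℕ) := by
    rw [← hcol ⟨n - 1, hnn⟩, Nat.mod_eq_of_lt hlast_lt]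
  -- the key step inequality
  have hstep : ∀ (j : ℕ) (h : j + 1 < n),
      (fstat γ ⟨j, Nat.lt_of_succ_lt h⟩ : ℤ) + a (γ.2 ⟨j + 1, h⟩) ≤
        fstat γ ⟨j + 1, h⟩ + a (γ.2 ⟨j, Nat.lt_of_succ_lt h⟩) := by
    intro j h
    have hd := dstat_succ γ j
    have hmono' := hmono j h
    have hdj := hdvd ⟨j, Nat.lt_of_succ_lt h⟩
    have hdj1 := hdvd ⟨j + 1, h⟩
    have hznn : (0 : ℤ) ≤ (a (γ.2 ⟨j, Nat.lt_of_succ_lt h⟩) : ℤ) - a (γ.2 ⟨j + 1, h⟩) :=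
      sub_nonneg.mpr (by exact_mod_cast hmono')
    have he2 : dstat γ (j + 1 + 1) = dstat γ (j + 2) := by norm_num
    simp only [fstat]
    rw [hd, he2]
    by_cases hdesc : isDesc γ j
    · simp only [if_pos hdesc]
      obtain ⟨h', hor⟩ := hdesc
      push_cast
      rcases hor with hc | ⟨hc, hσ⟩
      · -- colors strictly increase
        have hc' : ((γ.1 ⟨j, Nat.lt_of_succ_lt h⟩ : ℕ) : ℤ) < (γ.1 ⟨j + 1, h⟩ : ℕ) := by
          exact_mod_cast hc
        have ht : ((r : ℤ) + (γ.1 ⟨j, Nat.lt_of_succ_lt h⟩ : ℕ) - (γ.1 ⟨j + 1, h⟩ : ℕ)) < r := by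
          omega
        have hdd : (r : ℤ) ∣ ((a (γ.2 ⟨j, Nat.lt_of_succ_lt h⟩) : ℤ) - a (γ.2 ⟨j + 1, h⟩))
            - ((r : ℤ) + (γ.1 ⟨j, Nat.lt_of_succ_lt h⟩ : ℕ) - (γ.1 ⟨j + 1, h⟩ : ℕ)) := by
          have h2 : (r : ℤ) ∣ _ := (hdj.sub hdj1).sub (dvd_refl (r : ℤ))
          convert h2 using 1
          ring
        have := aux_dvd_le (by exact_mod_cast hr) hznn ht hdd
        linarith
      · -- tie in colors, permutation descends: values strictly decrease
        have hcc : ((γ.1 ⟨j, Nat.lt_of_succ_lt h⟩ : ℕ) : ℤ) = (γ.1 ⟨j + 1, h⟩ : ℕ) := by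
          exact_mod_cast congrArg (fun x : Fin r => (x : ℤ)) hc
        have hne : a (γ.2 ⟨j, Nat.lt_of_succ_lt h⟩) ≠ a (γ.2 ⟨j + 1, h⟩) := by
          intro he
          exact absurd (hties j h he) (not_lt.mpr (le_of_lt hσ))
        have hlt : a (γ.2 ⟨j + 1, h⟩) < a (γ.2 ⟨j, Nat.lt_of_succ_lt h⟩) := by omega
        have hz : (0 : ℤ) < (a (γ.2 ⟨j, Nat.lt_of_succ_lt h⟩) : ℤ) - a (γ.2 ⟨j + 1, h⟩) :=
          sub_pos.mpr (by exact_mod_cast hlt)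
        have hdd : (r : ℤ) ∣ (a (γ.2 ⟨j, Nat.lt_of_succ_lt h⟩) : ℤ) - a (γ.2 ⟨j + 1, h⟩) := by
          have h2 : (r : ℤ) ∣ _ := hdj.sub hdj1
          convert h2 using 1
          linarith
        have := Int.le_of_dvd hz hdd
        linarith
    · simp only [if_neg hdesc]
      have hno : ¬((γ.1 ⟨j, Nat.lt_of_succ_lt h⟩ < γ.1 ⟨j + 1, h⟩) ∨
          (γ.1 ⟨j, Nat.lt_of_succ_lt h⟩ = γ.1 ⟨j + 1, h⟩ ∧
            γ.2 ⟨j + 1, h⟩ < γ.2 ⟨j, Nat.lt_of_succ_lt h⟩)) := fun hcon => hdesc ⟨h, hcon⟩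
      push_neg at hno
      obtain ⟨hc1, hc2⟩ := hno
      have hge : (γ.1 ⟨j + 1, h⟩ : ℕ) ≤ (γ.1 ⟨j, Nat.lt_of_succ_lt h⟩ : ℕ) :=
        Fin.le_def.mp hc1
      push_cast
      rcases Nat.lt_or_ge ((γ.1 ⟨j + 1, h⟩ : ℕ)) ((γ.1 ⟨j, Nat.lt_of_succ_lt h⟩ : ℕ)) with hlt | hge2
      · -- colors strictly decrease
        have hub := (γ.1 ⟨j, Nat.lt_of_succ_lt h⟩).isLt
        have ht : ((γ.1 ⟨j, Nat.lt_of_succ_lt h⟩ : ℕ) : ℤ) - (γ.1 ⟨j + 1, h⟩ : ℕ) < r := by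
          omega
        have hdd : (r : ℤ) ∣ ((a (γ.2 ⟨j, Nat.lt_of_succ_lt h⟩) : ℤ) - a (γ.2 ⟨j + 1, h⟩))
            - (((γ.1 ⟨j, Nat.lt_of_succ_lt h⟩ : ℕ) : ℤ) - (γ.1 ⟨j + 1, h⟩ : ℕ)) := by
          have h2 : (r : ℤ) ∣ _ := hdj.sub hdj1
          convert h2 using 1
          ring
        have := aux_dvd_le (by exact_mod_cast hr) hznn ht hdd
        linarith
      · -- colors equal
        have hceq : ((γ.1 ⟨j, Nat.lt_of_succ_lt h⟩ : ℕ) : ℤ) = (γ.1 ⟨j + 1, h⟩ : ℕ) := by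
          omega
        have hm' : ((a (γ.2 ⟨j + 1, h⟩)) : ℤ) ≤ a (γ.2 ⟨j, Nat.lt_of_succ_lt h⟩) := by
          exact_mod_cast hmono'
        linarith
  -- nonnegativity by downward induction
  have hfb : ∀ (m j : ℕ) (hj : j < n), j + m = n - 1 → fstat γ ⟨j, hj⟩ ≤ a (γ.2 ⟨j, hj⟩) := by
    intro m
    induction m with
    | zero =>
      intro j hj hje
      have : j = n - 1 := by omega
      subst this
      have : fstat γ ⟨n - 1, hj⟩ = (γ.1 ⟨n - 1, hj⟩ : ℕ) := by
        simp only [fstat]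
        have : n - 1 + 1 = n := by omega
        rw [this, dstat_top, Nat.mul_zero, Nat.zero_add]
      rw [this]
      exact le_of_eq hlast.symm
    | succ m ih =>
      intro j hj hje
      have h1 : j + 1 < n := by omega
      have h2 := hstep j h1
      have h3 := ih (j + 1) h1 (by omega)
      have h3' : (fstat γ ⟨j + 1, h1⟩ : ℤ) ≤ a (γ.2 ⟨j + 1, h1⟩) := by exact_mod_cast h3
      have : (fstat γ ⟨j, hj⟩ : ℤ) ≤ a (γ.2 ⟨j, hj⟩) := by linarith
      exact_mod_cast this
  have hfb' : ∀ (j : ℕ) (hj : j < n), fstat γ ⟨j, hj⟩ ≤ a (γ.2 ⟨j, hj⟩) := fun j hj =>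
    hfb (n - 1 - j) j hj (by omega)
  constructor
  · intro j h
    have hle := hfb' j (Nat.lt_of_succ_lt h)
    refine ⟨hle, ?_⟩
    have hdf : (r : ℤ) ∣ (fstat γ ⟨j, Nat.lt_of_succ_lt h⟩ : ℤ)
        - (γ.1 ⟨j, Nat.lt_of_succ_lt h⟩ : ℕ) := by
      simp only [fstat]
      push_cast
      exact ⟨dstat γ (j + 1), by ring⟩
    have hda := hdvd ⟨j, Nat.lt_of_succ_lt h⟩
    have : (r : ℤ) ∣ (a (γ.2 ⟨j, Nat.lt_of_succ_lt h⟩) : ℤ) - fstat γ ⟨j, Nat.lt_of_succ_lt h⟩ := by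
      have : (r : ℤ) ∣ _ := hda.sub hdf
      convert this using 1
      ring
    have hcast : ((a (γ.2 ⟨j, Nat.lt_of_succ_lt h⟩) - fstat γ ⟨j, Nat.lt_of_succ_lt h⟩ : ℕ) : ℤ)
        = (a (γ.2 ⟨j, Nat.lt_of_succ_lt h⟩) : ℤ) - fstat γ ⟨j, Nat.lt_of_succ_lt h⟩ :=
      Nat.cast_sub hle
    exact_mod_cast hcast ▸ this
  · intro j h
    have h1 : j + 1 < n := Nat.lt_of_succ_lt h
    have h2 := hstep j h1
    have h3 := hfb' j (Nat.lt_of_succ_lt h1)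
    have h4 := hfb' (j + 1) h1
    omega
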